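/- Let V be a finite-dimensional nonzero vector space over an algebraically closed field F, let A, A* be linear endomorphisms of V with no common proper nonzero invariant subspace, and suppose there is a nondegenerate bilinear form ⟨·,·⟩ on V with ⟨Au,v⟩ = ⟨u,Av⟩ and ⟨A*u,v⟩ = ⟨u,A*v⟩ for all u,v ∈ V. Then there exists a unique antiautomorphism † of End(V) fixing both A and A*, and moreover X†† = X for all X ∈ End(V). -/

import Mathlib

/-!
The algebra generated by `A` and `A*` has no invariant subspaces other than `0` and `V`, so by
Burnside's theorem (Schur's lemma plus Jacobson density over an algebraically closed field) it is
all of `End(V)`. An antiautomorphism is an algebra homomorphism into `End(V)ᵐᵒᵖ`, hence is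
determined by its values on `A` and `A*`; this gives uniqueness, and `††` is an automorphism fixing
`A` and `A*`, hence the identity. Existence: the adjoint with respect to `⟨·,·⟩` reverses products
and fixes `A` and `A*` because they are self-adjoint.
-/

open Module LinearMap

theorem map_one_of_surjective_of_map_mul_rev {M N : Type*} [MulOneClass M] [MulOneClass N]
    {τ : M → N} (hτ : Function.Surjective τ) (hmul : ∀ x y, τ (x * y) = τ y * τ x) :
    τ 1 = 1 := by
  obtain ⟨x, hx⟩ := hτ 1
  simpa [hx] using (hmul x 1).symm

section Antihomomorphism

variable {R A : Type*} [CommSemiring R] [Semiring A] [Algebra R A] {s : Set A}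

def LinearMap.toAlgHomOp (ρ : A →ₗ[R] A) (h1 : ρ 1 = 1)
    (hmul : ∀ x y, ρ (x * y) = ρ y * ρ x) : A →ₐ[R] Aᵐᵒᵖ :=
  AlgHom.ofLinearMap ((MulOpposite.opLinearEquiv R).toLinearMap ∘ₗ ρ) (by simp [h1])
    fun x y ↦ by simp [hmul]

theorem LinearMap.eq_of_map_mul_rev_of_adjoin_eq_top (hs : Algebra.adjoin R s = ⊤)
    {ρ ρ' : A →ₗ[R] A} (h1 : ρ 1 = 1) (h1' : ρ' 1 = 1)
    (hmul : ∀ x y, ρ (x * y) = ρ y * ρ x) (hmul' : ∀ x y, ρ' (x * y) = ρ' y * ρ' x)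
    (heq : Set.EqOn ρ ρ' s) : ρ = ρ' := by
  have := AlgHom.ext_of_adjoin_eq_top hs (φ₁ := ρ.toAlgHomOp h1 hmul)
    (φ₂ := ρ'.toAlgHomOp h1' hmul') fun x hx ↦ congrArg MulOpposite.op (heq hx)
  ext x
  exact congrArg MulOpposite.unop (AlgHom.congr_fun this x)

theorem LinearMap.involutive_of_map_mul_rev_of_adjoin_eq_top (hs : Algebra.adjoin R s = ⊤)
    {ρ : A →ₗ[R] A} (h1 : ρ 1 = 1) (hmul : ∀ x y, ρ (x * y) = ρ y * ρ x)
    (hfix : ∀ x ∈ s, ρ x = x) : Function.Involutive ρ := by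
  have := AlgHom.ext_of_adjoin_eq_top hs
    (φ₁ := AlgHom.ofLinearMap (ρ ∘ₗ ρ) (by simp [h1]) fun x y ↦ by simp [hmul])
    (φ₂ := AlgHom.id R A) fun x hx ↦ by simp [hfix x hx]
  exact fun x ↦ AlgHom.congr_fun this x

end Antihomomorphism

section Burnside

variable {F V : Type*} [Field F] [AddCommGroup V] [Module F V]

theorem Subalgebra.isSimpleModule_of_irreducible [Nontrivial V] (S : Subalgebra F (End F V))
    {s : Set (End F V)} (hs : s ⊆ S)
    (h : ∀ W : Submodule F V, (∀ X ∈ s, ∀ v ∈ W, X v ∈ W) → W = ⊥ ∨ W = ⊤) :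
    IsSimpleModule S V := by
  refine (isSimpleModule_iff _ _).mpr ⟨fun N ↦ ?_⟩
  have := h (N.restrictScalars F) fun X hX v hv ↦ N.smul_mem ⟨X, hs hX⟩ hv
  simpa [Submodule.restrictScalars_eq_bot_iff, Submodule.restrictScalars_eq_top_iff] using this

variable [IsAlgClosed F] [FiniteDimensional F V]

theorem Subalgebra.eq_top_of_isSimpleModule (S : Subalgebra F (End F V)) [IsSimpleModule S V] :
    S = ⊤ := by
  have : Module.Finite (End S V) V := .of_restrictScalars_finite F (End S V) V
  refine eq_top_iff.mpr fun X _ ↦ ?_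
  -- by Schur's lemma every `S`-endomorphism of `V` is a scalar, so `X` commutes with it
  have hX : ∀ (f : End S V) (v : V), X (f v) = f (X v) := fun f v ↦ by
    obtain ⟨c, rfl⟩ := (IsSimpleModule.algebraMap_end_bijective_of_isAlgClosed F (A := S)).2 f
    simp [Algebra.algebraMap_eq_smul_one]
  obtain ⟨s, hs⟩ := Module.Finite.toModuleEnd_moduleEnd_surjective (R := S) (M := V)
    { X.toAddMonoidHom with map_smul' := hX }
  convert s.2
  ext v
  exact (congr($hs v)).symm

theorem Algebra.adjoin_eq_top_of_irreducible [Nontrivial V] {s : Set (End F V)}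
    (h : ∀ W : Submodule F V, (∀ X ∈ s, ∀ v ∈ W, X v ∈ W) → W = ⊥ ∨ W = ⊤) :
    Algebra.adjoin F s = ⊤ :=
  have := (Algebra.adjoin F s).isSimpleModule_of_irreducible Algebra.subset_adjoin h
  Subalgebra.eq_top_of_isSimpleModule _

end Burnside

namespace LinearMap.BilinForm

variable {K V : Type*} [Field K] [AddCommGroup V] [Module K V] [FiniteDimensional K V]
  {B : LinearMap.BilinForm K V} (hB : B.Nondegenerate)

noncomputable def leftAdjointₗ : End K V →ₗ[K] End K V where
  toFun := B.leftAdjointOfNondegenerate hB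
  map_add' X Y := ((isAdjointPair_iff_eq_of_nondegenerate B hB _ _).mp
    ((isAdjointPairLeftAdjointOfNondegenerate B hB X).add
      (isAdjointPairLeftAdjointOfNondegenerate B hB Y))).symm
  map_smul' c X := ((isAdjointPair_iff_eq_of_nondegenerate B hB _ _).mp
    ((isAdjointPairLeftAdjointOfNondegenerate B hB X).smul c)).symm

theorem isAdjointPair_leftAdjointₗ (X : End K V) : IsAdjointPair B B (leftAdjointₗ hB X) X :=
  isAdjointPairLeftAdjointOfNondegenerate B hB X

theorem leftAdjointₗ_eq_iff {X Y : End K V} : leftAdjointₗ hB X = Y ↔ IsAdjointPair B B Y X :=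
  eq_comm.trans (isAdjointPair_iff_eq_of_nondegenerate B hB Y X).symm

theorem leftAdjointₗ_mul (X Y : End K V) :
    leftAdjointₗ hB (X * Y) = leftAdjointₗ hB Y * leftAdjointₗ hB X :=
  (leftAdjointₗ_eq_iff hB).mpr
    ((isAdjointPair_leftAdjointₗ hB Y).mul (isAdjointPair_leftAdjointₗ hB X))

theorem leftAdjointₗ_bijective : Function.Bijective (leftAdjointₗ hB) := by
  have hinj : Function.Injective (leftAdjointₗ hB) := by
    refine (injective_iff_map_eq_zero _).mpr fun X hX ↦ LinearMap.ext fun v ↦ hB.2 _ fun u ↦ ?_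
    simpa using ((leftAdjointₗ_eq_iff hB).mp hX u v).symm
  exact ⟨hinj, injective_iff_surjective.mp hinj⟩

end LinearMap.BilinForm

open LinearMap.BilinForm

theorem stmt_5 {F V : Type*} [Field F] [IsAlgClosed F] [AddCommGroup V] [Module F V]
    [FiniteDimensional F V] [Nontrivial V]
    (A Astar : Module.End F V)
    (hirr : ∀ W : Submodule F V, (∀ v ∈ W, A v ∈ W) → (∀ v ∈ W, Astar v ∈ W) →
      W = ⊥ ∨ W = ⊤)
    (B : V →ₗ[F] V →ₗ[F] F)
    (hnd1 : ∀ v : V, (∀ w : V, B v w = 0) → v = 0)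
    (hnd2 : ∀ w : V, (∀ v : V, B v w = 0) → w = 0)
    (hBA : ∀ u v : V, B (A u) v = B u (A v))
    (hBAs : ∀ u v : V, B (Astar u) v = B u (Astar v)) :
    (∃! ρ : Module.End F V →ₗ[F] Module.End F V,
      Function.Bijective ρ ∧
      (∀ X Y : Module.End F V, ρ (X * Y) = ρ Y * ρ X) ∧
      ρ A = A ∧ ρ Astar = Astar) ∧
    (∀ ρ : Module.End F V →ₗ[F] Module.End F V,
      Function.Bijective ρ →
      (∀ X Y : Module.End F V, ρ (X * Y) = ρ Y * ρ X) →
      ρ A = A → ρ Astar = Astar →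
      ∀ X : Module.End F V, ρ (ρ X) = X) := by
  have hgen : Algebra.adjoin F {A, Astar} = ⊤ :=
    Algebra.adjoin_eq_top_of_irreducible fun W hW ↦ hirr W (hW A (by simp)) (hW Astar (by simp))
  have hfix (τ : End F V →ₗ[F] End F V) (hA : τ A = A) (hAs : τ Astar = Astar) :
      ∀ X ∈ ({A, Astar} : Set (End F V)), τ X = X := by
    rintro X (rfl | rfl) <;> assumption
  have hB : B.Nondegenerate := ⟨hnd1, hnd2⟩
  have hAdjA : leftAdjointₗ hB A = A := (leftAdjointₗ_eq_iff hB).mpr hBA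
  have hAdjAs : leftAdjointₗ hB Astar = Astar := (leftAdjointₗ_eq_iff hB).mpr hBAs
  refine ⟨⟨leftAdjointₗ hB, ⟨leftAdjointₗ_bijective hB, leftAdjointₗ_mul hB, hAdjA, hAdjAs⟩, ?_⟩,
    fun τ hbij hmul hA hAs ↦ involutive_of_map_mul_rev_of_adjoin_eq_top hgen
      (map_one_of_surjective_of_map_mul_rev hbij.2 hmul) hmul (hfix τ hA hAs)⟩
  rintro τ ⟨hbij, hmul, hA, hAs⟩
  refine eq_of_map_mul_rev_of_adjoin_eq_top hgen
    (map_one_of_surjective_of_map_mul_rev hbij.2 hmul)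
    (map_one_of_surjective_of_map_mul_rev (leftAdjointₗ_bijective hB).2 (leftAdjointₗ_mul hB))
    hmul (leftAdjointₗ_mul hB) fun X hX ↦ ?_
  rw [hfix τ hA hAs X hX, hfix _ hAdjA hAdjAs X hX]
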